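/- arXiv:2006.03530 — 2 statements merged into one kernel-verified Lean document; each statement's English description precedes it below -/
import Mathlib

section
/- Let H be an n×n positive definite Hermitian matrix with eigenvalues in [1/κ, 1] for κ ≥ 1. Then ln(det(H)) = −∑_{k=1}^∞ tr((I−H)^k)/k, and for any m ≥ κ·ln(2nκ/ε) with ε > 0, the truncation satisfies 0 ≤ −∑_{k=1}^m tr((I−H)^k)/k − ln(det(H)) ≤ ε/2. -/
/-!
Diagonalising `H`, both sides split over its eigenvalues `λ ∈ [1/κ, 1]`:
`tr((I - H)^k) = ∑ (1 - λ)^k` and `ln det H = ∑ ln λ`. For each eigenvalue the series is the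
Mercator series of `-ln λ = -ln (1 - (1 - λ))`, whose terms are nonnegative, and its tail after
`m` terms is at most `(1 - λ)^(m+1) / λ ≤ κ e^{-mλ} ≤ κ e^{-m/κ}`. The `n` tails add up to
`n κ e^{-m/κ}`, which is at most `ε/2` once `m ≥ κ ln(2nκ/ε)`.
-/

open Finset Real
open scoped ComplexOrder

namespace Matrix.IsHermitian

variable {𝕜 ι : Type*} [RCLike 𝕜] [Fintype ι] [DecidableEq ι] {A : Matrix ι ι 𝕜}

theorem trace_cfc (hA : A.IsHermitian) (f : ℝ → ℝ) :
    (cfc f A).trace = ∑ i, (f (hA.eigenvalues i) : 𝕜) := by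
  rw [hA.cfc_eq, IsHermitian.cfc, Unitary.conjStarAlgAut_apply, trace_mul_cycle,
    Unitary.coe_star_mul_self, one_mul, trace_diagonal]
  rfl

theorem one_sub_pow_eq_cfc (hA : A.IsHermitian) (k : ℕ) :
    (1 - A) ^ k = cfc (fun x : ℝ => (1 - x) ^ k) A := by
  rw [cfc_pow .., cfc_sub .., cfc_const_one .., cfc_id' ..]

theorem trace_one_sub_pow (hA : A.IsHermitian) (k : ℕ) :
    ((1 - A) ^ k).trace = ((∑ i, (1 - hA.eigenvalues i) ^ k : ℝ) : 𝕜) := by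
  rw [hA.one_sub_pow_eq_cfc, hA.trace_cfc, RCLike.ofReal_sum]

end Matrix.IsHermitian

theorem Matrix.PosDef.log_re_det {𝕜 ι : Type*} [RCLike 𝕜] [Fintype ι] [DecidableEq ι]
    {A : Matrix ι ι 𝕜} (hA : A.PosDef) :
    log (RCLike.re A.det) = ∑ i, log (hA.1.eigenvalues i) := by
  rw [hA.1.det_eq_prod_eigenvalues, ← RCLike.ofReal_prod, RCLike.ofReal_re,
    log_prod fun i _ => (hA.eigenvalues_pos i).ne']

theorem hasSum_one_sub_pow_div_neg_log {x : ℝ} (hx0 : 0 < x) (hx2 : x < 2) :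
    HasSum (fun k : ℕ => (1 - x) ^ (k + 1) / (k + 1)) (-log x) := by
  have h : |1 - x| < 1 := abs_lt.2 ⟨by linarith, by linarith⟩
  simpa using hasSum_pow_div_log_of_abs_lt_one h

theorem sum_range_one_sub_pow_div_le_neg_log {x : ℝ} (hx0 : 0 < x) (hx1 : x ≤ 1) (m : ℕ) :
    ∑ k ∈ range m, (1 - x) ^ (k + 1) / (k + 1) ≤ -log x := by
  have hr0 : 0 ≤ 1 - x := by linarith
  exact sum_le_hasSum _ (fun k _ => by positivity)
    (hasSum_one_sub_pow_div_neg_log hx0 (by linarith))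

theorem neg_log_sub_sum_range_one_sub_pow_div_le {x : ℝ} (hx0 : 0 < x) (hx1 : x ≤ 1) (m : ℕ) :
    -log x - ∑ k ∈ range m, (1 - x) ^ (k + 1) / (k + 1) ≤ (1 - x) ^ (m + 1) / x := by
  have h : |1 - x| < 1 := abs_lt.2 ⟨by linarith, by linarith⟩
  have := abs_log_sub_add_sum_range_le h m
  rw [abs_of_nonneg (by linarith : 0 ≤ 1 - x), sub_sub_cancel] at this
  linarith [neg_le_abs (∑ k ∈ range m, (1 - x) ^ (k + 1) / (k + 1) + log x)]

theorem one_sub_pow_succ_div_le_mul_exp {x κ : ℝ} (hκ : 0 < κ) (hxκ : 1 / κ ≤ x) (hx1 : x ≤ 1)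
    (m : ℕ) : (1 - x) ^ (m + 1) / x ≤ κ * exp (-(m / κ)) := by
  have hx0 : 0 < x := lt_of_lt_of_le (by positivity) hxκ
  have hr0 : 0 ≤ 1 - x := by linarith
  have hpow : (1 - x) ^ (m + 1) ≤ exp (-(m / κ)) :=
    calc (1 - x) ^ (m + 1) ≤ (1 - x) ^ m := pow_le_pow_of_le_one hr0 (by linarith) m.le_succ
      _ ≤ exp (-x) ^ m := pow_le_pow_left₀ hr0 (one_sub_le_exp_neg x) m
      _ = exp (-(m * x)) := by rw [← exp_nat_mul]; ring_nf
      _ ≤ exp (-(m / κ)) := by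
        gcongr
        rw [div_eq_mul_one_div]
        gcongr
  have hinv : 1 / x ≤ κ := by rwa [one_div_le hx0 hκ]
  calc (1 - x) ^ (m + 1) / x = 1 / x * (1 - x) ^ (m + 1) := by ring
    _ ≤ κ * exp (-(m / κ)) := mul_le_mul hinv hpow (by positivity) hκ.le

theorem mul_mul_exp_neg_div_le_half {n : ℕ} {κ ε : ℝ} {m : ℝ} (hκ : 0 < κ) (hε : 0 < ε)
    (hm : κ * log (2 * n * κ / ε) ≤ m) : n * (κ * exp (-(m / κ))) ≤ ε / 2 := by
  rcases n.eq_zero_or_pos with rfl | hn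
  · simpa using (half_pos hε).le
  have hn0 : (0 : ℝ) < n := by exact_mod_cast hn
  have hexp : exp (-(m / κ)) ≤ ε / (2 * n * κ) := by
    rw [← inv_div (2 * n * κ) ε, ← exp_log (by positivity : 0 < 2 * n * κ / ε), ← exp_neg,
      exp_le_exp, neg_le_neg_iff, le_div_iff₀ hκ]
    linarith
  calc n * (κ * exp (-(m / κ))) ≤ n * (κ * (ε / (2 * n * κ))) := by gcongr
    _ = ε / 2 := by field_simp

theorem stmt3 {n : ℕ} (H : Matrix (Fin n) (Fin n) ℂ) (hH : H.PosDef)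
    (κ ε : ℝ) (hκ : 1 ≤ κ) (hε : 0 < ε)
    (h1 : ∀ i, hH.1.eigenvalues i ≤ 1)
    (h2 : ∀ i, 1 / κ ≤ hH.1.eigenvalues i) :
    Real.log (H.det.re)
      = -∑' k : ℕ, ((1 - H) ^ (k + 1)).trace.re / ((k : ℝ) + 1) ∧
    ∀ m : ℕ, κ * Real.log (2 * n * κ / ε) ≤ (m : ℝ) →
      0 ≤ -(∑ k ∈ Finset.range m, ((1 - H) ^ (k + 1)).trace.re / ((k : ℝ) + 1))
            - Real.log (H.det.re) ∧
      -(∑ k ∈ Finset.range m, ((1 - H) ^ (k + 1)).trace.re / ((k : ℝ) + 1))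
            - Real.log (H.det.re) ≤ ε / 2 := by
  have hκ0 : 0 < κ := by linarith
  set ev := hH.1.eigenvalues
  have hev0 : ∀ i, 0 < ev i := hH.eigenvalues_pos
  have htrace (k : ℕ) : ((1 - H) ^ (k + 1)).trace.re / ((k : ℝ) + 1)
      = ∑ i, (1 - ev i) ^ (k + 1) / ((k : ℝ) + 1) := by
    rw [hH.1.trace_one_sub_pow, ← RCLike.re_to_complex, RCLike.ofReal_re, sum_div]
  have hlogdet : log H.det.re = ∑ i, log (ev i) := hH.log_re_det
  simp only [htrace, hlogdet]
  refine ⟨?_, fun m hm => ?_⟩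
  · rw [← neg_eq_iff_eq_neg, ← sum_neg_distrib]
    exact ((hasSum_sum fun i _ =>
      hasSum_one_sub_pow_div_neg_log (hev0 i) (by linarith [h1 i])).tsum_eq).symm
  · rw [sum_comm, ← sum_neg_distrib, ← sum_sub_distrib]
    refine ⟨sum_nonneg fun i _ => ?_, ?_⟩
    · linarith [sum_range_one_sub_pow_div_le_neg_log (hev0 i) (h1 i) m]
    · calc _ ≤ ∑ _i : Fin n, κ * exp (-(m / κ)) := sum_le_sum fun i _ => by
            linarith [neg_log_sub_sum_range_one_sub_pow_div_le (hev0 i) (h1 i) m,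
              one_sub_pow_succ_div_le_mul_exp hκ0 (h2 i) (h1 i) m]
        _ = n * (κ * exp (-(m / κ))) := by simp
        _ ≤ ε / 2 := mul_mul_exp_neg_div_le_half hκ0 hε hm
end

section
/- Let A be an invertible n×n complex matrix with singular values σ₁(A) ≤ 1 and σₙ(A) ≥ 1/κ for κ ≥ 1. Define the 2n×2n Hermitian matrix Ĥ = (1/3)·[[A†A, −A†],[−A, 2I]]. Then Ĥ is positive definite, its inverse is Ĥ^{-1} = 3·[[2(A†A)^{-1}, A^{-1}],[(A†)^{-1}, I]], its largest eigenvalue is at most 1, and its smallest eigenvalue is at least (3κ)^{-2}. In particular, Ĥ^{-1}[s, n+t] = 3·A^{-1}[s,t] for all s, t ∈ [n]. -/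
open Matrix
open scoped ComplexOrder

open scoped Matrix.Norms.L2Operator

/-!
Write `Ĥ = Gᴴ K G` with `G = diag(A, 1)` and `K = (1/3) [[1, -1], [-1, 2]] ⊗ 1`. The scalar
`2 × 2` matrix has eigenvalues `(3 ± √5)/6 ∈ [1/9, 1]`, so `9⁻¹ GᴴG ≤ Ĥ ≤ GᴴG` in the Loewner
order, and `GᴴG = diag(AᴴA, 1)` lies between `κ⁻²` and `1` because the singular values of `A` lie
in `[1/κ, 1]`. The continuous functional calculus turns these Loewner bounds into bounds on the
eigenvalues; the inverse is checked by block multiplication.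
-/

open scoped MatrixOrder

namespace Matrix

variable {m n : Type*} [Fintype m] [Fintype n] [DecidableEq m] [DecidableEq n]

lemma conjTranspose_mul_self_le_one {A : Matrix n n ℂ} (hA : ‖A‖ ≤ 1) : Aᴴ * A ≤ 1 :=
  calc Aᴴ * A ≤ algebraMap ℝ _ (‖A‖ ^ 2) := CStarAlgebra.star_mul_le_algebraMap_norm_sq
    _ ≤ algebraMap ℝ _ 1 := algebraMap_mono _ (pow_le_one₀ (norm_nonneg A) hA)
    _ = 1 := map_one _

lemma algebraMap_inv_sq_le_conjTranspose_mul_self {A : Matrix n n ℂ} (hA : IsUnit A) {κ : ℝ}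
    (hκ : 0 < κ) (hinv : ‖A⁻¹‖ ≤ κ) : algebraMap ℝ _ (κ ^ 2)⁻¹ ≤ Aᴴ * A := by
  have hAA : A⁻¹ * A = 1 := nonsing_inv_mul A ((isUnit_iff_isUnit_det A).1 hA)
  have hnorm : star A⁻¹ * A⁻¹ ≤ algebraMap ℝ _ (κ ^ 2) :=
    CStarAlgebra.star_mul_le_algebraMap_norm_sq.trans
      (algebraMap_mono _ (pow_le_pow_left₀ (norm_nonneg _) hinv 2))
  have hone : 1 ≤ κ ^ 2 • (Aᴴ * A) :=
    calc (1 : Matrix n n ℂ) = star A * (star A⁻¹ * A⁻¹) * A := by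
          rw [← mul_assoc, ← star_mul, mul_assoc, hAA, star_one, one_mul]
      _ ≤ star A * algebraMap ℝ _ (κ ^ 2) * A := star_left_conjugate_le_conjugate hnorm A
      _ = κ ^ 2 • (Aᴴ * A) := by
          rw [← Algebra.commutes, ← Algebra.smul_def, smul_mul_assoc, star_eq_conjTranspose]
  calc algebraMap ℝ _ (κ ^ 2)⁻¹ = (κ ^ 2)⁻¹ • (1 : Matrix n n ℂ) :=
        Algebra.algebraMap_eq_smul_one _
    _ ≤ (κ ^ 2)⁻¹ • κ ^ 2 • (Aᴴ * A) := smul_le_smul_of_nonneg_left hone (by positivity)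
    _ = Aᴴ * A := by rw [smul_smul, inv_mul_cancel₀ (by positivity), one_smul]

lemma fromBlocks_le_fromBlocks {P P' : Matrix m m ℂ} {Q Q' : Matrix n n ℂ} (hP : P ≤ P')
    (hQ : Q ≤ Q') : fromBlocks P 0 0 Q ≤ fromBlocks P' 0 0 Q' := by
  rw [← sub_nonneg] at hP hQ ⊢
  obtain ⟨X, hX⟩ := CStarAlgebra.nonneg_iff_eq_star_mul_self.1 hP
  obtain ⟨Y, hY⟩ := CStarAlgebra.nonneg_iff_eq_star_mul_self.1 hQ
  have hsub : fromBlocks P' 0 0 Q' - fromBlocks P 0 0 Q = fromBlocks (P' - P) 0 0 (Q' - Q) := by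
    simp [sub_eq_add_neg, fromBlocks_neg, fromBlocks_add]
  have hstar : fromBlocks (star X * X) 0 0 (star Y * Y) =
      star (fromBlocks X 0 0 Y) * fromBlocks X 0 0 Y := by
    simp [star_eq_conjTranspose, fromBlocks_conjTranspose, fromBlocks_multiply]
  rw [hsub, hX, hY, hstar]
  exact star_mul_self_nonneg _

lemma fromBlocks_algebraMap (r : ℝ) :
    fromBlocks (algebraMap ℝ (Matrix m m ℂ) r) 0 0 (algebraMap ℝ (Matrix n n ℂ) r) =
      algebraMap ℝ _ r := by
  simp [Algebra.algebraMap_eq_smul_one, ← fromBlocks_one, fromBlocks_smul]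

variable (n) in
noncomputable def symmBlocks (a b d : ℝ) : Matrix (n ⊕ n) (n ⊕ n) ℂ :=
  fromBlocks (a • 1) (b • 1) (b • 1) (d • 1)

lemma posSemidef_symmBlocks {a b d : ℝ} (hd : 0 < d) (h : b ^ 2 ≤ a * d) :
    (symmBlocks n a b d).PosSemidef := by
  have hD : (d • 1 : Matrix n n ℂ).PosDef := PosDef.one.smul hd
  let := hD.isUnit.invertible
  have hDinv : (d • 1 : Matrix n n ℂ)⁻¹ = d⁻¹ • 1 := by
    refine inv_eq_left_inv ?_
    rw [smul_mul_smul, one_mul, inv_mul_cancel₀ hd.ne', one_smul]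
  have hB : symmBlocks n a b d = fromBlocks (a • 1) (b • 1) (b • 1)ᴴ (d • 1) := by
    simp [symmBlocks]
  have hschur : a • 1 - (b • 1) * (d • 1 : Matrix n n ℂ)⁻¹ * (b • 1)ᴴ = (a - b ^ 2 / d) • 1 := by
    rw [hDinv, conjTranspose_smul, star_trivial, conjTranspose_one, smul_mul_smul, smul_mul_smul,
      one_mul, one_mul, sub_smul]
    congr 2
    ring
  rw [hB, PosDef.fromBlocks₂₂ _ _ hD, hschur]
  exact PosSemidef.one.smul (sub_nonneg.2 ((div_le_iff₀ hd).2 h))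

lemma symmBlocks_le_symmBlocks {a b d a' b' d' : ℝ} (hd : d < d')
    (h : (b' - b) ^ 2 ≤ (a' - a) * (d' - d)) : symmBlocks n a b d ≤ symmBlocks n a' b' d' := by
  have hsub : symmBlocks n a' b' d' - symmBlocks n a b d =
      symmBlocks n (a' - a) (b' - b) (d' - d) := by
    simp [symmBlocks, sub_eq_add_neg, fromBlocks_neg, fromBlocks_add, add_smul]
  rw [le_iff, hsub]
  exact posSemidef_symmBlocks (sub_pos.2 hd) h

lemma symmBlocks_self_zero_self (c : ℝ) : symmBlocks n c 0 c = algebraMap ℝ _ c := by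
  rw [symmBlocks, ← fromBlocks_algebraMap (m := n), Algebra.algebraMap_eq_smul_one, zero_smul]

lemma star_fromBlocks_mul_self (A : Matrix n n ℂ) :
    star (fromBlocks A 0 0 1) * fromBlocks A 0 0 1 = fromBlocks (Aᴴ * A) 0 0 (1 : Matrix n n ℂ) := by
  simp [star_eq_conjTranspose, fromBlocks_conjTranspose, fromBlocks_multiply]

section Eigenvalues

variable {𝕜 : Type*} [RCLike 𝕜] {H : Matrix n n 𝕜} {c : ℝ}

lemma IsHermitian.le_eigenvalues_of_algebraMap_le (hH : H.IsHermitian)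
    (h : algebraMap ℝ _ c ≤ H) (i : n) : c ≤ hH.eigenvalues i :=
  (algebraMap_le_iff_le_spectrum hH.isSelfAdjoint).1 h _ (hH.eigenvalues_mem_spectrum_real i)

lemma IsHermitian.eigenvalues_le_of_le_algebraMap (hH : H.IsHermitian)
    (h : H ≤ algebraMap ℝ _ c) (i : n) : hH.eigenvalues i ≤ c :=
  (le_algebraMap_iff_spectrum_le hH.isSelfAdjoint).1 h _ (hH.eigenvalues_mem_spectrum_real i)

end Eigenvalues

end Matrix

section HHat

variable {n : Type*} [Fintype n] [DecidableEq n]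

noncomputable def hHat (A : Matrix n n ℂ) : Matrix (n ⊕ n) (n ⊕ n) ℂ :=
  (3 : ℂ)⁻¹ • fromBlocks (Aᴴ * A) (-Aᴴ) (-A) ((2 : ℂ) • 1)

lemma hHat_eq_star_mul_symmBlocks_mul (A : Matrix n n ℂ) :
    hHat A = star (fromBlocks A 0 0 1) * symmBlocks n 3⁻¹ (-3⁻¹) (2 / 3) * fromBlocks A 0 0 1 := by
  norm_num [hHat, symmBlocks, star_eq_conjTranspose, fromBlocks_conjTranspose, fromBlocks_multiply,
    fromBlocks_smul, ← Complex.coe_smul, smul_smul]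

lemma hHat_le_one {A : Matrix n n ℂ} (hA : ‖A‖ ≤ 1) : hHat A ≤ 1 := by
  rw [hHat_eq_star_mul_symmBlocks_mul]
  calc _ ≤ star (fromBlocks A 0 0 1) * symmBlocks n 1 0 1 * fromBlocks A 0 0 1 :=
        star_left_conjugate_le_conjugate (symmBlocks_le_symmBlocks (by norm_num) (by norm_num)) _
    _ = fromBlocks (Aᴴ * A) 0 0 1 := by
        rw [symmBlocks_self_zero_self, map_one, mul_one, star_fromBlocks_mul_self]
    _ ≤ fromBlocks 1 0 0 1 := fromBlocks_le_fromBlocks (conjTranspose_mul_self_le_one hA) le_rfl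
    _ = 1 := fromBlocks_one

lemma algebraMap_le_hHat {A : Matrix n n ℂ} (hA : IsUnit A) {κ : ℝ} (hκ : 1 ≤ κ)
    (hinv : ‖A⁻¹‖ ≤ κ) : algebraMap ℝ _ ((3 * κ)⁻¹ ^ 2) ≤ hHat A := by
  have hGG : algebraMap ℝ _ (κ ^ 2)⁻¹ ≤ fromBlocks (Aᴴ * A) 0 0 (1 : Matrix n n ℂ) := by
    rw [← fromBlocks_algebraMap]
    refine fromBlocks_le_fromBlocks
      (algebraMap_inv_sq_le_conjTranspose_mul_self hA (one_pos.trans_le hκ) hinv) ?_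
    rw [← map_one (algebraMap ℝ (Matrix n n ℂ))]
    exact algebraMap_mono _ (inv_le_one_of_one_le₀ (one_le_pow₀ hκ))
  rw [hHat_eq_star_mul_symmBlocks_mul]
  calc algebraMap ℝ _ ((3 * κ)⁻¹ ^ 2) = (9 : ℝ)⁻¹ • algebraMap ℝ _ (κ ^ 2)⁻¹ := by
        rw [Algebra.smul_def, ← map_mul]
        congr 1
        ring
    _ ≤ (9 : ℝ)⁻¹ • fromBlocks (Aᴴ * A) 0 0 (1 : Matrix n n ℂ) :=
        smul_le_smul_of_nonneg_left hGG (by norm_num)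
    _ = star (fromBlocks A 0 0 1) * symmBlocks n 9⁻¹ 0 9⁻¹ * fromBlocks A 0 0 1 := by
        rw [symmBlocks_self_zero_self, ← Algebra.commutes, mul_assoc, ← Algebra.smul_def,
          star_fromBlocks_mul_self]
    _ ≤ _ := star_left_conjugate_le_conjugate
        (symmBlocks_le_symmBlocks (by norm_num) (by norm_num)) _

lemma inv_hHat {A : Matrix n n ℂ} (hA : IsUnit A) :
    (hHat A)⁻¹ = (3 : ℂ) • fromBlocks ((2 : ℂ) • (Aᴴ * A)⁻¹) A⁻¹ (Aᴴ)⁻¹ 1 := by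
  have hdet : IsUnit A.det := (isUnit_iff_isUnit_det A).1 hA
  have hdetH : IsUnit Aᴴ.det := by rw [det_conjTranspose]; exact hdet.star
  refine inv_eq_right_inv ?_
  rw [hHat, smul_mul_smul_comm, inv_mul_cancel₀ three_ne_zero, one_smul, fromBlocks_multiply,
    Matrix.mul_inv_rev, ← fromBlocks_one]
  simp only [Matrix.mul_smul, Matrix.smul_mul, ← Matrix.mul_assoc, neg_mul, Matrix.mul_one,
    Matrix.one_mul, mul_nonsing_inv_cancel_right _ _ hdet, mul_nonsing_inv _ hdet,
    mul_nonsing_inv _ hdetH]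
  congr 1 <;> module

end HHat

theorem stmt9 {n : ℕ} (A : Matrix (Fin n) (Fin n) ℂ) (hA : IsUnit A)
    (κ : ℝ) (hκ : 1 ≤ κ) (hnorm : ‖A‖ ≤ 1) (hinv : ‖A⁻¹‖ ≤ κ)
    (Hhat : Matrix (Fin n ⊕ Fin n) (Fin n ⊕ Fin n) ℂ)
    (hH : Hhat = (3 : ℂ)⁻¹ •
      Matrix.fromBlocks (Aᴴ * A) (-Aᴴ) (-A) ((2 : ℂ) • 1)) :
    Hhat.PosDef ∧
    Hhat⁻¹ = (3 : ℂ) •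
      Matrix.fromBlocks ((2 : ℂ) • (Aᴴ * A)⁻¹) A⁻¹ (Aᴴ)⁻¹ 1 ∧
    (∀ (h : Hhat.IsHermitian) (i : Fin n ⊕ Fin n),
      h.eigenvalues i ≤ 1 ∧ ((3 * κ)⁻¹) ^ 2 ≤ h.eigenvalues i) ∧
    ∀ s t : Fin n, Hhat⁻¹ (Sum.inl s) (Sum.inr t) = 3 * A⁻¹ s t := by
  obtain rfl : Hhat = hHat A := hH
  have hlower := algebraMap_le_hHat hA hκ hinv
  have hupper : hHat A ≤ algebraMap ℝ _ 1 := by rw [map_one]; exact hHat_le_one hnorm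
  have hHerm : (hHat A).IsHermitian :=
    IsSelfAdjoint.of_nonneg ((algebraMap_nonneg _ (sq_nonneg _)).trans hlower)
  refine ⟨hHerm.posDef_iff_eigenvalues_pos.2 fun i => ?_, inv_hHat hA,
    fun h i => ⟨h.eigenvalues_le_of_le_algebraMap hupper i,
      h.le_eigenvalues_of_algebraMap_le hlower i⟩,
    fun s t => by simp [inv_hHat hA]⟩
  exact lt_of_lt_of_le (by positivity) (hHerm.le_eigenvalues_of_algebraMap_le hlower i)
end
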